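/- Let C be a finite set of centers, C* an optimal k-means solution with clusters A, and suppose A is unsettled with respect to C, i.e., φ_A(C) > 10·φ_A(C*). In one sampling round where each point x ∈ X is independently added with probability min(1, ℓ·φ_x(C)/φ_X(C)), the probability that A is not made settled (i.e., that after adding the sampled points C' we still have φ_A(C ∪ C') > 10·φ_A(C*)) is at most exp(−ℓ·φ_A(C)/(5·φ_X(C))). -/

import Mathlib

/-!
Call `p ∈ A` good if adding it to `C` already settles `A`, i.e. `φ_A(C ∪ {p}) ≤ 10 φ_A(C*)`.
The k-means++ estimate says that a D²-sampled point of `A` leaves expected cost at most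
`8 φ_A(μ_A) ≤ 8 φ_A(C*)`, so by Markov's inequality the good points carry at least a fifth of
`φ_A(C)`. If `A` stays unsettled, no good point was sampled; under independent sampling this has
probability `∏_{x good} (1 - p_x) ≤ exp (-∑_{x good} p_x) ≤ exp (-ℓ φ_A(C) / (5 φ_X(C)))`.
-/

attribute [local instance] Classical.propDecidable

open Finset Metric

theorem infDist_sq_le_two_mul_add {α : Type*} [PseudoMetricSpace α] (x y : α) (C : Set α) :
    infDist x C ^ 2 ≤ 2 * infDist y C ^ 2 + 2 * dist y x ^ 2 := by
  calc infDist x C ^ 2 ≤ (infDist y C + dist y x) ^ 2 := by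
        rw [dist_comm]
        exact pow_le_pow_left₀ infDist_nonneg infDist_le_infDist_add_dist 2
    _ ≤ 2 * infDist y C ^ 2 + 2 * dist y x ^ 2 := by
        nlinarith [sq_nonneg (infDist y C - dist y x)]

theorem infDist_sq_le_min_of_subset {α : Type*} [PseudoMetricSpace α] {C D : Set α} {a q : α}
    (hC : C.Nonempty) (hCD : C ⊆ D) (hq : q ∈ D) :
    infDist a D ^ 2 ≤ min (infDist a C ^ 2) (dist a q ^ 2) :=
  le_min (pow_le_pow_left₀ infDist_nonneg (infDist_le_infDist_of_subset hCD hC) 2)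
    (pow_le_pow_left₀ infDist_nonneg (infDist_le_dist_of_mem hq) 2)

theorem mul_sum_filter_lt_le_sum_mul {ι : Type*} (s : Finset ι) (w f : ι → ℝ) (t : ℝ)
    (hw : ∀ i ∈ s, 0 ≤ w i) (hf : ∀ i ∈ s, 0 ≤ f i) :
    t * ∑ i ∈ s with t < f i, w i ≤ ∑ i ∈ s, w i * f i :=
  calc t * ∑ i ∈ s with t < f i, w i
      ≤ ∑ i ∈ s with t < f i, w i * f i := by
        rw [mul_sum]
        refine sum_le_sum fun i hi => ?_
        rw [mul_comm]
        exact mul_le_mul_of_nonneg_left (mem_filter.1 hi).2.le (hw i (mem_filter.1 hi).1)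
    _ ≤ ∑ i ∈ s, w i * f i :=
        sum_le_sum_of_subset_of_nonneg (filter_subset _ _) fun i hi _ =>
          mul_nonneg (hw i hi) (hf i hi)

theorem one_sub_min_one_le_exp_neg (t : ℝ) : 1 - min 1 t ≤ Real.exp (-t) := by
  rcases le_total 1 t with h | h
  · rw [min_eq_left h, sub_self]
    exact (Real.exp_pos _).le
  · rw [min_eq_right h]
    exact Real.one_sub_le_exp_neg t

theorem prod_one_sub_min_one_le_exp_neg_sum {ι : Type*} (s : Finset ι) (t : ι → ℝ) :
    ∏ i ∈ s, (1 - min 1 (t i)) ≤ Real.exp (-∑ i ∈ s, t i) := by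
  rw [← sum_neg_distrib, Real.exp_sum]
  exact prod_le_prod (fun i _ => sub_nonneg.2 (min_le_left _ _))
    fun i _ => one_sub_min_one_le_exp_neg (t i)

section Seeding

variable {E : Type*} [NormedAddCommGroup E] [InnerProductSpace ℝ E]

theorem sum_sub_centroid_eq_zero (A : Finset E) :
    ∑ a ∈ A, (a - (A.card : ℝ)⁻¹ • ∑ x ∈ A, x) = 0 := by
  rcases A.eq_empty_or_nonempty with rfl | hA
  · simp
  have hcard : (A.card : ℝ) ≠ 0 := by exact_mod_cast hA.card_pos.ne'
  rw [sum_sub_distrib, sum_const, ← Nat.cast_smul_eq_nsmul ℝ, smul_smul,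
    mul_inv_cancel₀ hcard, one_smul, sub_self]

theorem sum_norm_sub_sq_eq_centroid_add (A : Finset E) (p : E) :
    ∑ a ∈ A, ‖a - p‖ ^ 2 = ∑ a ∈ A, ‖a - (A.card : ℝ)⁻¹ • ∑ x ∈ A, x‖ ^ 2
      + A.card * ‖p - (A.card : ℝ)⁻¹ • ∑ x ∈ A, x‖ ^ 2 := by
  set μ : E := (A.card : ℝ)⁻¹ • ∑ x ∈ A, x
  have hcross : ∑ a ∈ A, inner ℝ (a - μ) (p - μ) = 0 := by
    rw [← sum_inner, sum_sub_centroid_eq_zero, inner_zero_left]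
  have hsplit (a : E) : ‖a - p‖ ^ 2 = ‖a - μ‖ ^ 2 + ‖p - μ‖ ^ 2 - 2 * inner ℝ (a - μ) (p - μ) := by
    rw [← sub_sub_sub_cancel_right a p μ, norm_sub_sq_real]
    ring
  simp only [hsplit, sum_sub_distrib, sum_add_distrib, sum_const, ← mul_sum, hcross, nsmul_eq_mul]
  ring

theorem sum_sum_norm_sub_sq_eq (A : Finset E) :
    ∑ p ∈ A, ∑ a ∈ A, ‖a - p‖ ^ 2
      = 2 * A.card * ∑ a ∈ A, ‖a - (A.card : ℝ)⁻¹ • ∑ x ∈ A, x‖ ^ 2 := by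
  rw [sum_congr rfl fun p _ => sum_norm_sub_sq_eq_centroid_add A p, sum_add_distrib, sum_const,
    ← mul_sum, nsmul_eq_mul]
  ring

-- Divided by `φ_A(C)`, this is Lemma 3.2 of k-means++: a point of `A` sampled with
-- D²-weights leaves `A` with expected cost at most `8 φ_A(μ_A)`.
theorem sum_infDist_sq_mul_sum_min_le (A : Finset E) (C : Set E) :
    ∑ p ∈ A, infDist p C ^ 2 * ∑ a ∈ A, min (infDist a C ^ 2) (dist a p ^ 2)
      ≤ 8 * (∑ a ∈ A, ‖a - (A.card : ℝ)⁻¹ • ∑ x ∈ A, x‖ ^ 2) * ∑ a ∈ A, infDist a C ^ 2 := by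
  rcases A.eq_empty_or_nonempty with rfl | hA
  · simp
  set φA := ∑ a ∈ A, infDist a C ^ 2
  set M := fun p => ∑ a ∈ A, min (infDist a C ^ 2) (dist a p ^ 2)
  set D := fun p => ∑ a ∈ A, dist a p ^ 2
  have hM_nonneg (p : E) : 0 ≤ M p := sum_nonneg fun a _ => le_min (sq_nonneg _) (sq_nonneg _)
  have hM_le_D (p : E) : M p ≤ D p := sum_le_sum fun a _ => min_le_right _ _
  have hM_le_φA (p : E) : M p ≤ φA := sum_le_sum fun a _ => min_le_left _ _
  have hφA : 0 ≤ φA := sum_nonneg fun a _ => sq_nonneg _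
  have havg (p : E) : A.card * infDist p C ^ 2 ≤ 2 * φA + 2 * D p := by
    have h := sum_le_sum fun a (_ : a ∈ A) => infDist_sq_le_two_mul_add p a C
    rwa [sum_add_distrib, ← mul_sum, ← mul_sum, sum_const, nsmul_eq_mul] at h
  have hD : ∑ p ∈ A, D p = 2 * A.card * ∑ a ∈ A, ‖a - (A.card : ℝ)⁻¹ • ∑ x ∈ A, x‖ ^ 2 := by
    simp only [D, dist_eq_norm, sum_sum_norm_sub_sq_eq]
  refine le_of_mul_le_mul_left ?_ (show (0 : ℝ) < A.card by exact_mod_cast hA.card_pos)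
  calc A.card * ∑ p ∈ A, infDist p C ^ 2 * M p
      = ∑ p ∈ A, A.card * infDist p C ^ 2 * M p := by simp only [mul_sum, mul_assoc]
    _ ≤ ∑ p ∈ A, (2 * φA + 2 * D p) * M p :=
        sum_le_sum fun p _ => mul_le_mul_of_nonneg_right (havg p) (hM_nonneg p)
    _ ≤ ∑ p ∈ A, 4 * φA * D p := sum_le_sum fun p _ => by
        nlinarith [mul_le_mul_of_nonneg_left (hM_le_D p) hφA,
          mul_le_mul_of_nonneg_left (hM_le_φA p) ((hM_nonneg p).trans (hM_le_D p))]
    _ = A.card * (8 * (∑ a ∈ A, ‖a - (A.card : ℝ)⁻¹ • ∑ x ∈ A, x‖ ^ 2) * φA) := by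
        rw [← mul_sum, hD]
        ring

theorem sum_infDist_sq_le_five_mul_sum_filter (A : Finset E) (C : Set E) (c : ℝ)
    (hc : ∑ a ∈ A, ‖a - (A.card : ℝ)⁻¹ • ∑ x ∈ A, x‖ ^ 2 ≤ c) :
    ∑ a ∈ A, infDist a C ^ 2 ≤ 5 * ∑ p ∈ A with
      ∑ a ∈ A, min (infDist a C ^ 2) (dist a p ^ 2) ≤ 10 * c, infDist p C ^ 2 := by
  set φ := fun y => infDist y C ^ 2
  set M := fun p => ∑ a ∈ A, min (φ a) (dist a p ^ 2)
  have hφ (p : E) : 0 ≤ φ p := sq_nonneg _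
  have hM (p : E) : 0 ≤ M p := sum_nonneg fun a _ => le_min (hφ a) (sq_nonneg _)
  have hφA : 0 ≤ ∑ a ∈ A, φ a := sum_nonneg fun a _ => hφ a
  have hsplit := sum_filter_add_sum_filter_not A (fun p => M p ≤ 10 * c) φ
  simp only [not_le] at hsplit
  have hmarkov := mul_sum_filter_lt_le_sum_mul A φ M (10 * c) (fun p _ => hφ p) (fun p _ => hM p)
  have hseed : ∑ p ∈ A, φ p * M p ≤ 8 * c * ∑ a ∈ A, φ a :=
    (sum_infDist_sq_mul_sum_min_le A C).trans (by gcongr)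
  rcases (sum_nonneg fun a _ => sq_nonneg _ : (0 : ℝ) ≤ _).trans hc |>.eq_or_lt with rfl | hc0
  · -- off the filter `M p > 0`, so `φ p * M p = 0` forces `φ p = 0`
    have hzero : ∀ p ∈ A, φ p * M p = 0 :=
      (sum_eq_zero_iff_of_nonneg fun p _ => mul_nonneg (hφ p) (hM p)).1
        (le_antisymm (by simpa using hseed) (sum_nonneg fun p _ => mul_nonneg (hφ p) (hM p)))
    have hbad : ∑ p ∈ A with 10 * 0 < M p, φ p = 0 := sum_eq_zero fun p hp => by
      obtain ⟨hpA, hMp⟩ := mem_filter.1 hp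
      exact (mul_eq_zero.1 (hzero p hpA)).resolve_right (by simpa using hMp.ne')
    linarith
  · nlinarith

end Seeding

section Sampling

variable {α : Type*} [DecidableEq α]

/-- The probability that keeping each `x ∈ X` independently with probability `p x` keeps
exactly the subset `S`. -/
def sampleProb (p : α → ℝ) (X S : Finset α) : ℝ :=
  (∏ x ∈ S, p x) * ∏ x ∈ X \ S, (1 - p x)

theorem sum_powerset_sampleProb (p : α → ℝ) (X : Finset α) :
    ∑ S ∈ X.powerset, sampleProb p X S = 1 := by
  simp only [sampleProb, ← prod_add, add_sub_cancel, prod_const_one]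

theorem sum_powerset_sdiff_sampleProb (p : α → ℝ) {X G : Finset α} (hG : G ⊆ X) :
    ∑ S ∈ (X \ G).powerset, sampleProb p X S = ∏ x ∈ G, (1 - p x) := by
  have hfactor : ∀ S ∈ (X \ G).powerset,
      sampleProb p X S = (∏ x ∈ G, (1 - p x)) * sampleProb p (X \ G) S := by
    intro S hS
    have hGS : G ⊆ X \ S :=
      subset_sdiff.2 ⟨hG, (sdiff_disjoint.mono_left (mem_powerset.1 hS)).symm⟩
    rw [sampleProb, sampleProb, ← prod_sdiff hGS, sdiff_right_comm]
    ring
  rw [sum_congr rfl hfactor, ← mul_sum, sum_powerset_sampleProb, mul_one]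

theorem sum_filter_sampleProb_le_prod_of_disjoint (p : α → ℝ) {X G : Finset α}
    {P : Finset α → Prop} [DecidablePred P] (hp0 : ∀ x ∈ X, 0 ≤ p x) (hp1 : ∀ x ∈ X, p x ≤ 1)
    (hG : G ⊆ X) (hP : ∀ S ⊆ X, P S → Disjoint S G) :
    ∑ S ∈ X.powerset with P S, sampleProb p X S ≤ ∏ x ∈ G, (1 - p x) := by
  rw [← sum_powerset_sdiff_sampleProb p hG]
  refine sum_le_sum_of_subset_of_nonneg (fun S hS => ?_) fun S hS _ => ?_
  · obtain ⟨hSX, hPS⟩ := mem_filter.1 hS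
    exact mem_powerset.2 (subset_sdiff.2 ⟨mem_powerset.1 hSX, hP S (mem_powerset.1 hSX) hPS⟩)
  · have hSX : S ⊆ X := (mem_powerset.1 hS).trans sdiff_subset
    exact mul_nonneg (prod_nonneg fun x hx => hp0 x (hSX hx))
      (prod_nonneg fun x hx => sub_nonneg.2 (hp1 x (sdiff_subset hx)))

end Sampling

theorem unsettled_cluster_not_settled_prob_general (d : ℕ)
    (X A C Cstar : Finset (EuclideanSpace ℝ (Fin d)))
    (hAX : A ⊆ X) (hC : C.Nonempty)
    (ℓ : ℝ) (hℓ : 0 < ℓ)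
    -- A is a cluster of the optimal solution: its optimal cost is at least its
    -- one-center (centroid) cost
    (hcluster : ∑ a ∈ A, ‖a - (A.card : ℝ)⁻¹ • ∑ x ∈ A, x‖ ^ 2
      ≤ ∑ a ∈ A, Metric.infDist a (Cstar : Set (EuclideanSpace ℝ (Fin d))) ^ 2) :
    ∑ S ∈ X.powerset.filter (fun S =>
        10 * ∑ a ∈ A, Metric.infDist a (Cstar : Set (EuclideanSpace ℝ (Fin d))) ^ 2
          < ∑ a ∈ A, Metric.infDist a ((C ∪ S : Finset _) : Set (EuclideanSpace ℝ (Fin d))) ^ 2),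
      ((∏ x ∈ S, min 1 (ℓ * Metric.infDist x (C : Set (EuclideanSpace ℝ (Fin d))) ^ 2
            / ∑ y ∈ X, Metric.infDist y (C : Set (EuclideanSpace ℝ (Fin d))) ^ 2)) *
        ∏ x ∈ X \ S, (1 - min 1 (ℓ * Metric.infDist x (C : Set (EuclideanSpace ℝ (Fin d))) ^ 2
            / ∑ y ∈ X, Metric.infDist y (C : Set (EuclideanSpace ℝ (Fin d))) ^ 2)))
      ≤ Real.exp (-(ℓ * (∑ a ∈ A, Metric.infDist a (C : Set (EuclideanSpace ℝ (Fin d))) ^ 2)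
          / (5 * ∑ y ∈ X, Metric.infDist y (C : Set (EuclideanSpace ℝ (Fin d))) ^ 2))) := by
  set φ := fun y => infDist y (C : Set (EuclideanSpace ℝ (Fin d))) ^ 2
  set φX := ∑ y ∈ X, φ y
  set φstar := ∑ a ∈ A, infDist a (Cstar : Set (EuclideanSpace ℝ (Fin d))) ^ 2
  set G := {q ∈ A | ∑ a ∈ A, min (φ a) (dist a q ^ 2) ≤ 10 * φstar}
  have hG : ∑ a ∈ A, φ a ≤ 5 * ∑ q ∈ G, φ q :=
    sum_infDist_sq_le_five_mul_sum_filter A _ _ hcluster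
  have hmiss (S) (_ : S ⊆ X) (hS : 10 * φstar < ∑ a ∈ A, infDist a ((C ∪ S : Finset _) :
      Set (EuclideanSpace ℝ (Fin d))) ^ 2) : Disjoint S G :=
    disjoint_left.2 fun q hqS hqG => (mem_filter.1 hqG).2.not_gt <| hS.trans_le <|
      sum_le_sum fun a _ => infDist_sq_le_min_of_subset (coe_nonempty.2 hC)
        (coe_subset.2 subset_union_left) (by simp [hqS])
  have hφX : 0 ≤ φX := sum_nonneg fun y _ => sq_nonneg _
  have hp0 (x) (_ : x ∈ X) : 0 ≤ min 1 (ℓ * φ x / φX) :=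
    le_min zero_le_one (div_nonneg (mul_nonneg hℓ.le (sq_nonneg _)) hφX)
  calc _ ≤ ∏ x ∈ G, (1 - min 1 (ℓ * φ x / φX)) :=
        sum_filter_sampleProb_le_prod_of_disjoint _ hp0 (fun _ _ => min_le_left _ _)
          ((filter_subset _ _).trans hAX) hmiss
    _ ≤ Real.exp (-∑ x ∈ G, ℓ * φ x / φX) := prod_one_sub_min_one_le_exp_neg_sum _ _
    _ ≤ Real.exp (-(ℓ * (∑ a ∈ A, φ a) / (5 * φX))) := by
        rw [← sum_div, ← mul_sum, ← div_div]
        gcongr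
        linarith [mul_le_mul_of_nonneg_left hG hℓ.le]

/-- One sampling round of k-means|| overseeding: an unsettled optimal cluster A fails to
    become settled with probability at most exp(−ℓ φ_A(C)/(5 φ_X(C))).  The probability
    space is the independent-inclusion distribution on subsets S of X, where each x ∈ X is
    included with probability min(1, ℓ φ_x(C)/φ_X(C)). -/
theorem unsettled_cluster_not_settled_prob (d : ℕ)
    (X A C Cstar : Finset (EuclideanSpace ℝ (Fin d)))
    (hAX : A ⊆ X) (hA : A.Nonempty) (hC : C.Nonempty) (hCstar : Cstar.Nonempty)
    (ℓ : ℝ) (hℓ : 0 < ℓ)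
    (hXpos : 0 < ∑ y ∈ X, Metric.infDist y (C : Set (EuclideanSpace ℝ (Fin d))) ^ 2)
    -- A is a cluster of the optimal solution: its optimal cost is at least its
    -- one-center (centroid) cost
    (hcluster : ∑ a ∈ A, ‖a - (A.card : ℝ)⁻¹ • ∑ x ∈ A, x‖ ^ 2
      ≤ ∑ a ∈ A, Metric.infDist a (Cstar : Set (EuclideanSpace ℝ (Fin d))) ^ 2)
    -- A is unsettled with respect to C
    (hunsettled : 10 * ∑ a ∈ A, Metric.infDist a (Cstar : Set (EuclideanSpace ℝ (Fin d))) ^ 2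
      < ∑ a ∈ A, Metric.infDist a (C : Set (EuclideanSpace ℝ (Fin d))) ^ 2) :
    ∑ S ∈ X.powerset.filter (fun S =>
        10 * ∑ a ∈ A, Metric.infDist a (Cstar : Set (EuclideanSpace ℝ (Fin d))) ^ 2
          < ∑ a ∈ A, Metric.infDist a ((C ∪ S : Finset _) : Set (EuclideanSpace ℝ (Fin d))) ^ 2),
      ((∏ x ∈ S, min 1 (ℓ * Metric.infDist x (C : Set (EuclideanSpace ℝ (Fin d))) ^ 2
            / ∑ y ∈ X, Metric.infDist y (C : Set (EuclideanSpace ℝ (Fin d))) ^ 2)) *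
        ∏ x ∈ X \ S, (1 - min 1 (ℓ * Metric.infDist x (C : Set (EuclideanSpace ℝ (Fin d))) ^ 2
            / ∑ y ∈ X, Metric.infDist y (C : Set (EuclideanSpace ℝ (Fin d))) ^ 2)))
      ≤ Real.exp (-(ℓ * (∑ a ∈ A, Metric.infDist a (C : Set (EuclideanSpace ℝ (Fin d))) ^ 2)
          / (5 * ∑ y ∈ X, Metric.infDist y (C : Set (EuclideanSpace ℝ (Fin d))) ^ 2))) :=
  unsettled_cluster_not_settled_prob_general d X A C Cstar hAX hC ℓ hℓ hcluster
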